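/- Let 𝒜 be a p-S-ring over a finite abelian p-group H with an 𝒜-subgroup K of index p, and let T be a basic set of 𝒜. If |O(𝒜) ∩ K| · |T| > |H|/p, then O(𝒜) ∩ rad(T) is non-trivial. -/

import Mathlib

open scoped Classical Pointwise

noncomputable section

variable {H : Type*}

/-- The simple quantity of a subset `T` of `H` in the group algebra `ℚ H`. -/
def simpleQ [Group H] [Fintype H] (T : Set H) : MonoidAlgebra ℚ H :=
  ∑ h ∈ T.toFinset, MonoidAlgebra.single h (1 : ℚ)

/-- An S-ring over a finite group `H`: a partition of `H` containing `{1}`,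
closed under inversion, whose simple quantities span a subalgebra of `ℚ H`. -/
structure SRing (H : Type*) [Group H] [Fintype H] where
  basicSets : Set (Set H)
  exists_unique_mem : ∀ h : H, ∃! T, T ∈ basicSets ∧ h ∈ T
  nonempty_of_mem : ∀ T ∈ basicSets, T.Nonempty
  one_mem : ({1} : Set H) ∈ basicSets
  inv_mem : ∀ T ∈ basicSets, T⁻¹ ∈ basicSets
  mul_mem : ∀ T ∈ basicSets, ∀ S ∈ basicSets,
    simpleQ T * simpleQ S ∈ Submodule.span ℚ (simpleQ '' basicSets)

namespace SRing

variable [Group H] [Fintype H]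

/-- The underlying ℚ-subspace of the S-ring. -/
def carrier (A : SRing H) : Submodule ℚ (MonoidAlgebra ℚ H) :=
  Submodule.span ℚ (simpleQ '' A.basicSets)

/-- `S` is an `𝒜`-subset: its simple quantity lies in `𝒜`. -/
def IsSubset (A : SRing H) (S : Set H) : Prop := simpleQ S ∈ A.carrier

/-- The thin radical of the S-ring. -/
def thin (A : SRing H) : Set H := {g | ({g} : Set H) ∈ A.basicSets}

end SRing

/-- The radical of a subset `S`: elements `h` with `hS = Sh = S`. -/
def radSet [Group H] (S : Set H) : Set H := {h | {h} * S = S ∧ S * {h} = S}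

/-- The automorphism group of the Cayley digraph `Cay(H, T)`. -/
def cayAut [Group H] (T : Set H) : Subgroup (Equiv.Perm H) where
  carrier := {g | ∀ x y : H, y * x⁻¹ ∈ T ↔ g y * (g x)⁻¹ ∈ T}
  one_mem' := by intro x y; simp
  mul_mem' := by
    intro a b ha hb x y
    simpa [Equiv.Perm.mul_apply] using (hb x y).trans (ha (b x) (b y))
  inv_mem' := by
    intro a ha x y
    simpa using (ha (a⁻¹ x) (a⁻¹ y)).symm

/-- The automorphism group of an S-ring. -/
def SRing.aut [Group H] [Fintype H] (A : SRing H) : Subgroup (Equiv.Perm H) :=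
  ⨅ T ∈ A.basicSets, cayAut T

/-- The right regular representation of `H` inside `Sym(H)`. -/
def rightRegular (H : Type*) [Group H] : Subgroup (Equiv.Perm H) where
  carrier := Set.range fun h : H => Equiv.mulRight h
  one_mem' := ⟨1, by ext x; simp⟩
  mul_mem' := by
    rintro _ _ ⟨a, rfl⟩ ⟨b, rfl⟩
    exact ⟨b * a, by ext x; simp [mul_assoc]⟩
  inv_mem' := by
    rintro _ ⟨a, rfl⟩
    exact ⟨a⁻¹, by ext x; simp⟩

/-- The orbit of `h` under the stabilizer of the identity in `G ≤ Sym(H)`. -/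
def orbitOfStab [Group H] (G : Subgroup (Equiv.Perm H)) (h : H) : Set H :=
  {x | ∃ g ∈ G, g 1 = 1 ∧ g h = x}

/-- A Schurian S-ring: its basic sets are the orbits of the identity-stabilizer
of some overgroup of the right regular representation. -/
def SRing.IsSchurian [Group H] [Fintype H] (A : SRing H) : Prop :=
  ∃ G : Subgroup (Equiv.Perm H), rightRegular H ≤ G ∧
    A.basicSets = {S | ∃ h : H, S = orbitOfStab G h}

/-- A p-S-ring: all basic sets have `p`-power size. -/
def SRing.IsPSRing [Group H] [Fintype H] (A : SRing H) (p : ℕ) : Prop :=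
  ∀ T ∈ A.basicSets, ∃ k : ℕ, Nat.card T = p ^ k

/-- A decomposable S-ring: a nontrivial `E/F`-wreath product. -/
def SRing.Decomposable [Group H] [Fintype H] (A : SRing H) : Prop :=
  ∃ E F : Subgroup H, F.Normal ∧ F ≤ E ∧ E ≠ ⊤ ∧ F ≠ ⊥ ∧
    A.IsSubset ↑E ∧ A.IsSubset ↑F ∧
    ∀ T ∈ A.basicSets, T ⊆ ((E : Set H))ᶜ → (F : Set H) ⊆ radSet T

/-- The 2-closure of a permutation group `G ≤ Sym(Ω)`: all permutations
preserving every `G`-orbit on `Ω × Ω`. -/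
def twoClosure {Ω : Type*} (G : Subgroup (Equiv.Perm Ω)) : Subgroup (Equiv.Perm Ω) where
  carrier := {γ | ∀ a b : Ω, ∃ g ∈ G, g a = γ a ∧ g b = γ b}
  one_mem' := fun a b => ⟨1, G.one_mem, rfl, rfl⟩
  mul_mem' := by
    intro γ δ hγ hδ a b
    obtain ⟨g, hg, hga, hgb⟩ := hδ a b
    obtain ⟨g', hg', hg'a, hg'b⟩ := hγ (δ a) (δ b)
    exact ⟨g' * g, G.mul_mem hg' hg, by simp [Equiv.Perm.mul_apply, hga, hg'a],
      by simp [Equiv.Perm.mul_apply, hgb, hg'b]⟩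
  inv_mem' := by
    intro γ hγ a b
    obtain ⟨g, hg, hga, hgb⟩ := hγ (γ⁻¹ a) (γ⁻¹ b)
    have h1 : g (γ⁻¹ a) = a := by rw [hga]; simp
    have h2 : g (γ⁻¹ b) = b := by rw [hgb]; simp
    refine ⟨g⁻¹, G.inv_mem hg, ?_, ?_⟩
    · exact g.injective (by rw [h1]; simp)
    · exact g.injective (by rw [h2]; simp)

/-! Every basic set `T` lies in a single left coset of `K`. Indeed, the coefficients of the
product of the simple quantities of `T` and `K`, an element of `𝒜`, are constant on `T`, so `T`
meets each of the `m` cosets of `K` it touches in the same number of points; hence `m` divides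
`|T|`, a power of `p`, while `m < p` unless `T ⊆ K`. Right translation by a thin element permutes
the basic sets, so if no non-trivial thin element fixes `T`, the map `(t, g) ↦ t g` from
`T × (O(𝒜) ∩ K)` to the coset `t₀ K` is injective, and `|O(𝒜) ∩ K| · |T| ≤ |K| = |H| / p`. -/

open scoped Finset

section SimpleQuantity

variable [Group H] [Fintype H]

lemma coeff_simpleQ (S : Set H) (h : H) :
    (simpleQ S).coeff h = if h ∈ S then 1 else 0 := by
  simp [simpleQ, MonoidAlgebra.coeff_single, Finsupp.single_apply]

lemma coeff_simpleQ_mul (S T : Set H) (h : H) :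
    (simpleQ S * simpleQ T).coeff h = #{s ∈ S.toFinset | s⁻¹ * h ∈ T} := by
  rw [simpleQ, Finset.sum_mul, MonoidAlgebra.coeff_sum, Finsupp.finsetSum_apply]
  simp only [MonoidAlgebra.coeff_single_mul_apply, one_mul, coeff_simpleQ]
  rw [Finset.sum_boole]

lemma simpleQ_singleton (g : H) : simpleQ ({g} : Set H) = MonoidAlgebra.single g 1 := by
  simp [simpleQ]

lemma simpleQ_mul_singleton (S : Set H) (g : H) :
    simpleQ (S * {g}) = simpleQ S * simpleQ {g} := by
  ext h
  simp [simpleQ_singleton, coeff_simpleQ]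

end SimpleQuantity

namespace SRing

variable [Group H] [Fintype H] (A : SRing H)

lemma eq_of_mem_of_mem {B C : Set H} (hB : B ∈ A.basicSets) (hC : C ∈ A.basicSets)
    {x : H} (hxB : x ∈ B) (hxC : x ∈ C) : B = C :=
  (A.exists_unique_mem x).unique ⟨hB, hxB⟩ ⟨hC, hxC⟩

lemma simpleQ_mem_carrier {T : Set H} (hT : T ∈ A.basicSets) : simpleQ T ∈ A.carrier :=
  Submodule.subset_span ⟨T, hT, rfl⟩

lemma mul_mem_carrier {x y : MonoidAlgebra ℚ H} (hx : x ∈ A.carrier) (hy : y ∈ A.carrier) :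
    x * y ∈ A.carrier := by
  have hle : A.carrier * A.carrier ≤ A.carrier := by
    rw [carrier, Submodule.span_mul_span, Submodule.span_le]
    rintro _ ⟨_, ⟨T, hT, rfl⟩, _, ⟨S, hS, rfl⟩, rfl⟩
    exact A.mul_mem T hT S hS
  exact hle (Submodule.mul_mem_mul hx hy)

lemma coeff_eq_of_mem_carrier {x : MonoidAlgebra ℚ H} (hx : x ∈ A.carrier)
    {B : Set H} (hB : B ∈ A.basicSets) {a b : H} (ha : a ∈ B) (hb : b ∈ B) :
    x.coeff a = x.coeff b := by
  induction hx using Submodule.span_induction with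
  | mem y hy =>
    obtain ⟨T, hT, rfl⟩ := hy
    have hmem : a ∈ T ↔ b ∈ T :=
      ⟨fun haT => A.eq_of_mem_of_mem hB hT ha haT ▸ hb,
        fun hbT => A.eq_of_mem_of_mem hB hT hb hbT ▸ ha⟩
    simp only [coeff_simpleQ, hmem]
  | zero => rfl
  | add x y _ _ ihx ihy => simp only [MonoidAlgebra.coeff_add, Finsupp.add_apply, ihx, ihy]
  | smul c x _ ihx => simp only [MonoidAlgebra.coeff_smul_apply, ihx]

lemma subset_of_isSubset {S : Set H} (hS : A.IsSubset S) {B : Set H} (hB : B ∈ A.basicSets)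
    {x : H} (hxB : x ∈ B) (hxS : x ∈ S) : B ⊆ S := by
  intro y hy
  have h := A.coeff_eq_of_mem_carrier hS hB hxB hy
  simp only [coeff_simpleQ, if_pos hxS] at h
  by_contra hyS
  simp [hyS] at h

lemma isSubset_mul_singleton {S : Set H} (hS : A.IsSubset S) {g : H} (hg : g ∈ A.thin) :
    A.IsSubset (S * {g}) := by
  rw [IsSubset, simpleQ_mul_singleton]
  exact A.mul_mem_carrier hS (A.simpleQ_mem_carrier hg)

lemma inv_mem_thin {g : H} (hg : g ∈ A.thin) : g⁻¹ ∈ A.thin := by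
  simpa [thin] using A.inv_mem {g} hg

lemma mul_singleton_mem_basicSets {T : Set H} (hT : T ∈ A.basicSets) {g : H}
    (hg : g ∈ A.thin) : T * {g} ∈ A.basicSets := by
  obtain ⟨t, ht⟩ := A.nonempty_of_mem T hT
  obtain ⟨B, ⟨hB, htgB⟩, -⟩ := A.exists_unique_mem (t * g)
  have hBsub : B ⊆ T * {g} :=
    A.subset_of_isSubset (A.isSubset_mul_singleton (A.simpleQ_mem_carrier hT) hg) hB htgB
      (Set.mul_mem_mul ht rfl)
  have hTsub : T ⊆ B * {g⁻¹} :=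
    A.subset_of_isSubset (A.isSubset_mul_singleton (A.simpleQ_mem_carrier hB)
      (A.inv_mem_thin hg)) hT ht ⟨t * g, htgB, g⁻¹, rfl, by group⟩
  have hcancel : B * {g⁻¹} * {g} = B := by
    rw [mul_assoc, Set.singleton_mul_singleton, inv_mul_cancel, Set.singleton_one, mul_one]
  have : T * {g} = B := (Set.mul_subset_mul_right hTsub).trans hcancel.le |>.antisymm hBsub
  exact this ▸ hB

lemma mul_mem_thin {g h : H} (hg : g ∈ A.thin) (hh : h ∈ A.thin) : g * h ∈ A.thin := by
  simpa [thin] using A.mul_singleton_mem_basicSets hg hh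

lemma card_fiber_mk_eq {K : Subgroup H} (hK : A.IsSubset K) {T : Set H}
    (hT : T ∈ A.basicSets) {t t' : H} (ht : t ∈ T) (ht' : t' ∈ T) :
    #{s ∈ T.toFinset | ((s : H) : H ⧸ K) = t}
      = #{s ∈ T.toFinset | ((s : H) : H ⧸ K) = t'} := by
  have h :=
    A.coeff_eq_of_mem_carrier (A.mul_mem_carrier (A.simpleQ_mem_carrier hT) hK) hT ht ht'
  simp only [coeff_simpleQ_mul, Nat.cast_inj, SetLike.mem_coe] at h
  simpa only [QuotientGroup.eq] using h

lemma card_image_mk_mul_card_fiber {K : Subgroup H} (hK : A.IsSubset K) {T : Set H}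
    (hT : T ∈ A.basicSets) {t : H} (ht : t ∈ T) :
    #(T.toFinset.image ((↑) : H → H ⧸ K)) * #{s ∈ T.toFinset | ((s : H) : H ⧸ K) = t}
      = #T.toFinset := by
  rw [Finset.card_eq_sum_card_image ((↑) : H → H ⧸ K) T.toFinset, ← smul_eq_mul,
    ← Finset.sum_const]
  refine Finset.sum_congr rfl fun q hq => ?_
  obtain ⟨s, hs, rfl⟩ := Finset.mem_image.mp hq
  exact A.card_fiber_mk_eq hK hT ht (Set.mem_toFinset.mp hs)

theorem IsPSRing.subset_smul_of_index_eq {A : SRing H} {p : ℕ} (hp : p.Prime)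
    (hA : A.IsPSRing p) {K : Subgroup H} (hK : A.IsSubset K) (hidx : K.index = p)
    {T : Set H} (hT : T ∈ A.basicSets) {t : H} (ht : t ∈ T) : T ⊆ t • (K : Set H) := by
  by_cases hTK : ∃ s ∈ T, s ∈ K
  · obtain ⟨s, hsT, hsK⟩ := hTK
    have hTsub : T ⊆ K := A.subset_of_isSubset hK hT hsT hsK
    rwa [smul_coe_set (hTsub ht)]
  push Not at hTK
  set m := #(T.toFinset.image ((↑) : H → H ⧸ K))
  have hdvd : m ∣ p ^ (hA T hT).choose := by
    rw [← (hA T hT).choose_spec, Nat.card_coe_set_eq, Set.ncard_eq_toFinset_card',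
      ← A.card_image_mk_mul_card_fiber hK hT ht]
    exact dvd_mul_right _ _
  -- `T` misses `K`, so the cosets it meets are among the `p - 1` non-trivial ones
  have hlt : m < p := by
    have hsub : T.toFinset.image ((↑) : H → H ⧸ K) ⊆ Finset.univ.erase ((1 : H) : H ⧸ K) := by
      simp only [Finset.subset_iff, Finset.mem_image, Set.mem_toFinset, Finset.mem_erase,
        Finset.mem_univ, and_true]
      rintro _ ⟨s, hs, rfl⟩ hs1
      exact hTK s hs (by simpa [QuotientGroup.eq] using hs1)
    calc m ≤ #(Finset.univ.erase ((1 : H) : H ⧸ K)) := Finset.card_le_card hsub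
      _ < #(Finset.univ : Finset (H ⧸ K)) := Finset.card_erase_lt_of_mem (Finset.mem_univ _)
      _ = p := by rw [Finset.card_univ, ← Nat.card_eq_fintype_card, ← Subgroup.index, hidx]
  have hm : m = 1 := by
    obtain ⟨j, -, hj⟩ := (Nat.dvd_prime_pow hp).mp hdvd
    rcases j with _ | j
    · simpa using hj
    · exact absurd (hj ▸ hlt) (Nat.le_self_pow j.succ_ne_zero p).not_gt
  intro t' ht'
  have hq := Finset.card_le_one.mp hm.le _ (Finset.mem_image_of_mem _ (Set.mem_toFinset.mpr ht))
    _ (Finset.mem_image_of_mem _ (Set.mem_toFinset.mpr ht'))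
  exact (mem_leftCoset_iff t).mpr (QuotientGroup.eq.mp hq)

theorem ncard_thin_inter_mul_ncard_le {K : Subgroup H} {T : Set H} (hT : T ∈ A.basicSets)
    {t₀ : H} (hTK : T ⊆ t₀ • (K : Set H)) (hfix : ∀ g ∈ A.thin, T * {g} = T → g = 1) :
    (A.thin ∩ K).ncard * T.ncard ≤ Nat.card K := by
  rw [← Set.ncard_prod, ← SetLike.coe_sort_coe, Nat.card_coe_set_eq,
    ← Set.ncard_smul_set t₀ (K : Set H)]
  refine Set.ncard_le_ncard_of_injOn (fun x => x.2 * x.1) ?_ ?_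
  · rintro ⟨g, t⟩ ⟨⟨-, hgK⟩, htT⟩
    have := (mem_leftCoset_iff t₀).mp (hTK htT)
    exact (mem_leftCoset_iff t₀).mpr (by simpa [mul_assoc] using K.mul_mem this hgK)
  · rintro ⟨g₁, t₁⟩ ⟨⟨hg₁, -⟩, ht₁⟩ ⟨g₂, t₂⟩ ⟨⟨hg₂, -⟩, ht₂⟩ (he : t₁ * g₁ = t₂ * g₂)
    have hTg : T * {g₁} = T * {g₂} :=
      A.eq_of_mem_of_mem (A.mul_singleton_mem_basicSets hT hg₁)
        (A.mul_singleton_mem_basicSets hT hg₂) (Set.mul_mem_mul ht₁ rfl)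
        (he ▸ Set.mul_mem_mul ht₂ rfl)
    have hfixed : T * {g₁ * g₂⁻¹} = T := by
      rw [← Set.singleton_mul_singleton, ← mul_assoc, hTg, mul_assoc,
        Set.singleton_mul_singleton, mul_inv_cancel, Set.singleton_one, mul_one]
    have hg : g₁ = g₂ :=
      mul_inv_eq_one.mp (hfix _ (A.mul_mem_thin hg₁ (A.inv_mem_thin hg₂)) hfixed)
    subst hg
    simpa using mul_right_cancel he

end SRing

theorem stmt11_general {H : Type*} [CommGroup H] [Fintype H] {p : ℕ} (hp : p.Prime)
    (A : SRing H) (hA : A.IsPSRing p)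
    (K : Subgroup H) (hK : A.IsSubset ↑K) (hidx : K.index = p)
    (T : Set H) (hT : T ∈ A.basicSets)
    (hbig : Nat.card ↥(A.thin ∩ (K : Set H)) * Nat.card T > Fintype.card H / p) :
    ∃ g : H, g ≠ 1 ∧ g ∈ A.thin ∧ g ∈ radSet T := by
  by_contra! hnone
  have hfix : ∀ g ∈ A.thin, T * {g} = T → g = 1 := fun g hg hgT =>
    by_contra fun hg1 => hnone g hg1 hg ⟨by rwa [mul_comm], hgT⟩
  obtain ⟨t₀, ht₀⟩ := A.nonempty_of_mem T hT
  have hle := A.ncard_thin_inter_mul_ncard_le hT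
    (hA.subset_smul_of_index_eq hp hK hidx hT ht₀) hfix
  have hcardK : Fintype.card H / p = Nat.card K := by
    rw [← Nat.card_eq_fintype_card, ← K.card_mul_index, hidx, Nat.mul_div_cancel _ hp.pos]
  rw [Nat.card_coe_set_eq, Nat.card_coe_set_eq, hcardK] at hbig
  omega

/-- a counting condition forcing a non-trivial thin element in
the radical of a basic set. -/
theorem stmt11 {H : Type*} [CommGroup H] [Fintype H] {p : ℕ} (hp : p.Prime)
    (hpH : IsPGroup p H) (A : SRing H) (hA : A.IsPSRing p)
    (K : Subgroup H) (hK : A.IsSubset ↑K) (hidx : K.index = p)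
    (T : Set H) (hT : T ∈ A.basicSets)
    (hbig : Nat.card ↥(A.thin ∩ (K : Set H)) * Nat.card T > Fintype.card H / p) :
    ∃ g : H, g ≠ 1 ∧ g ∈ A.thin ∧ g ∈ radSet T :=
  stmt11_general hp A hA K hK hidx T hT hbig
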